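/- Let p be a prime, let m ≥ 1, w, r, A be integers with 0 ≤ A ≤ p−1 and A ≤ r ≤ m(p−1). Then Σ_{i=0}^{p−1−A} Δ_p(m, r−A, w−i) ≥ Δ_p(m+1, r, w), with equality when A = 0, i.e. Σ_{i=0}^{p−1} Δ_p(m, r, w−i) = Δ_p(m+1, r, w). -/

import Mathlib

/-- The `p`-nomial coefficient `C(m,s)_p`: the coefficient of `x^s` in
`(1 + x + ⋯ + x^{p−1})^m ∈ ℤ[x]`, extended by `0` for `s < 0`. -/
noncomputable def pnomial (p m : ℕ) (s : ℤ) : ℤ :=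
  if 0 ≤ s then
    ((∑ i ∈ Finset.range p, (Polynomial.X : Polynomial ℤ) ^ i) ^ m).coeff s.toNat
  else 0

/-- `C(m,>s)_p = ∑_{i>s} C(m,i)_p`.  Since `C(m,i)_p = 0` for `i > m(p−1)`,
the sum may be truncated at `m(p−1)`. -/
noncomputable def pnomialGT (p m : ℕ) (s : ℤ) : ℤ :=
  ∑ i ∈ Finset.range (m * (p - 1) + 1), if s < (i : ℤ) then pnomial p m i else 0

/-- `Δ_p(m,r,w)`: writing `r = α(p−1)+β` with `0 ≤ β ≤ p−2` (so `α = r/(p−1)`,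
`β = r % (p−1)`), this is `C(m−α,>w)_p` if `β = 0`, and
`C(m−α,>w)_p − ∑_{j=p−β}^{p−1} C(m−α−1,>w−j)_p` otherwise. -/
noncomputable def Δp (p m r : ℕ) (w : ℤ) : ℤ :=
  if r % (p - 1) = 0 then pnomialGT p (m - r / (p - 1)) w
  else pnomialGT p (m - r / (p - 1)) w -
    ∑ j ∈ Finset.Icc (p - r % (p - 1)) (p - 1),
      pnomialGT p (m - r / (p - 1) - 1) (w - (j : ℤ))

/-- The Manhattan weight `|v|_M = ∑ i, val(v_i)` of a vector `v ∈ 𝔽_p^m`. -/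
def manhattanWeight {p m : ℕ} (v : Fin m → ZMod p) : ℕ := ∑ i, (v i).val

/-!
Write `T_a f (w) = ∑_{j<a} f (w - j)` (`windowSum a f w`). As `C(n+1,>·)_p = T_p C(n,>·)_p`, for
`α < m` one gets `Δ_p(m,r,·) = T_{p-β} C(m-α-1,>·)_p`, and the equality is the commutation of
`T_p` with `T_{p-β}`. The inequality becomes `T_a T_b g ≤ T_{a'} T_{b'} g` for `g = C(n,>·)_p ≥ 0`,
`a + b = a' + b'` and `min a b ≤ min a' b'`: for `b ≤ a`, passing from `T_{a+1} T_b g` to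
`T_a T_{b+1} g` adds `T_a g - T_b g ≥ 0`.
-/

lemma pnomial_neg (p m : ℕ) {s : ℤ} (hs : s < 0) : pnomial p m s = 0 := by
  simp [pnomial, not_le.2 hs]

lemma pnomial_zero (p : ℕ) (s : ℤ) : pnomial p 0 s = if s = 0 then 1 else 0 := by
  unfold pnomial
  split_ifs <;> first | omega | simp [Polynomial.coeff_one, *] <;> omega

lemma pnomial_succ (p m : ℕ) (s : ℤ) :
    pnomial p (m + 1) s = ∑ i ∈ Finset.range p, pnomial p m (s - i) := by
  rcases lt_or_ge s 0 with hs | hs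
  · rw [pnomial_neg _ _ hs]
    exact (Finset.sum_eq_zero fun i _ => pnomial_neg _ _ (by omega)).symm
  simp only [pnomial, if_pos hs, pow_succ, Finset.mul_sum, Polynomial.finsetSum_coeff,
    Polynomial.coeff_mul_X_pow']
  refine Finset.sum_congr rfl fun i _ => ?_
  by_cases hi : (i : ℤ) ≤ s
  · rw [if_pos (by omega), if_pos (by omega)]
    congr 1
    omega
  · rw [if_neg (by omega), if_neg (by omega)]

lemma pnomial_nonneg (p m : ℕ) (s : ℤ) : 0 ≤ pnomial p m s := by
  induction m generalizing s with
  | zero => rw [pnomial_zero]; split <;> norm_num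
  | succ m ih => rw [pnomial_succ]; exact Finset.sum_nonneg fun i _ => ih _

lemma pnomial_eq_zero_of_gt (p m : ℕ) {s : ℤ} (hs : (m * (p - 1) : ℕ) < s) :
    pnomial p m s = 0 := by
  rw [pnomial, if_pos (by omega)]
  refine Polynomial.coeff_eq_zero_of_natDegree_lt (lt_of_le_of_lt (b := m * (p - 1)) ?_ (by omega))
  refine Polynomial.natDegree_pow_le.trans (Nat.mul_le_mul_left _ ?_)
  refine Polynomial.natDegree_sum_le_of_forall_le _ _ fun i hi => ?_
  rw [Polynomial.natDegree_X_pow]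
  exact Nat.le_sub_one_of_lt (Finset.mem_range.1 hi)

lemma pnomialGT_nonneg (p m : ℕ) (w : ℤ) : 0 ≤ pnomialGT p m w :=
  Finset.sum_nonneg fun _ _ => by split <;> simp [pnomial_nonneg]

lemma pnomialGT_eq_zero (p m : ℕ) {w : ℤ} (hw : (m * (p - 1) : ℕ) ≤ w) : pnomialGT p m w = 0 :=
  Finset.sum_eq_zero fun i hi => if_neg (by simp at hi; omega)

lemma pnomialGT_sub_one (p m : ℕ) (w : ℤ) :
    pnomialGT p m (w - 1) = pnomialGT p m w + pnomial p m w := by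
  have hsplit : ∀ i : ℕ, (if w - 1 < i then pnomial p m i else 0) =
      (if w < i then pnomial p m i else 0) + if (i : ℤ) = w then pnomial p m w else 0 := by
    intro i
    split_ifs <;> first | omega | simp_all
  rw [pnomialGT, Finset.sum_congr rfl fun i _ => hsplit i, Finset.sum_add_distrib, ← pnomialGT]
  congr 1
  rcases lt_or_ge w 0 with hw | hw
  · rw [pnomial_neg _ _ hw]
    simp
  lift w to ℕ using hw
  by_cases hwM : w < m * (p - 1) + 1
  · simp [hwM]
  · rw [pnomial_eq_zero_of_gt _ _ (by omega)]
    simp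

lemma eq_of_backward_recurrence {f g d : ℤ → ℤ} (K : ℤ) (hf : ∀ w, f (w - 1) = f w + d w)
    (hg : ∀ w, g (w - 1) = g w + d w) (hK : ∀ w, K ≤ w → f w = g w) : f = g := by
  funext w
  rcases le_or_gt K w with hw | hw
  · exact hK w hw
  · exact Int.leInductionDown (motive := fun n _ => f n = g n) (hK K le_rfl)
      (fun n _ ih => by rw [hf, hg, ih]) w hw.le

def windowSum (a : ℕ) (f : ℤ → ℤ) (w : ℤ) : ℤ :=
  ∑ j ∈ Finset.range a, f (w - j)

section windowSum

variable {a b : ℕ} {f : ℤ → ℤ} {w : ℤ}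

lemma windowSum_one (f : ℤ → ℤ) : windowSum 1 f = f := by
  funext w
  simp [windowSum]

lemma windowSum_succ : windowSum (a + 1) f w = windowSum a f w + f (w - a) :=
  Finset.sum_range_succ _ _

lemma windowSum_add : windowSum (a + b) f w = windowSum a f w + windowSum b f (w - a) := by
  simp only [windowSum, Finset.sum_range_add, Nat.cast_add, sub_sub]

lemma windowSum_comm (a b : ℕ) (f : ℤ → ℤ) :
    windowSum a (windowSum b f) = windowSum b (windowSum a f) := by
  funext w
  simp only [windowSum]
  rw [Finset.sum_comm]
  simp only [sub_right_comm]

lemma windowSum_le_windowSum (hf : 0 ≤ f) (hab : a ≤ b) : windowSum a f w ≤ windowSum b f w :=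
  Finset.sum_le_sum_of_subset_of_nonneg (Finset.range_subset_range.2 hab) fun _ _ _ => hf _

lemma windowSum_succ_windowSum_add_windowSum :
    windowSum (a + 1) (windowSum b f) w + windowSum a f w =
      windowSum a (windowSum (b + 1) f) w + windowSum b f w := by
  have hinner : windowSum a (windowSum (b + 1) f) w =
      windowSum a (windowSum b f) w + windowSum a f (w - b) := by
    simp only [windowSum, Finset.sum_range_succ, Finset.sum_add_distrib, sub_right_comm]
  have hab : windowSum (a + b) f w = windowSum a f w + windowSum b f (w - a) := windowSum_add
  have hba : windowSum (b + a) f w = windowSum b f w + windowSum a f (w - b) := windowSum_add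
  rw [add_comm b a] at hba
  rw [windowSum_succ, hinner]
  linarith

lemma windowSum_succ_windowSum_le (hf : 0 ≤ f) (hba : b ≤ a) :
    windowSum (a + 1) (windowSum b f) w ≤ windowSum a (windowSum (b + 1) f) w := by
  linarith [windowSum_succ_windowSum_add_windowSum (a := a) (b := b) (f := f) (w := w),
    windowSum_le_windowSum (w := w) hf hba]

lemma windowSum_add_windowSum_le {d : ℕ} (hf : 0 ≤ f) (h : b + d ≤ a) :
    windowSum (a + d) (windowSum b f) w ≤ windowSum a (windowSum (b + d) f) w := by
  induction d generalizing a with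
  | zero => rfl
  | succ d ih =>
    calc windowSum (a + (d + 1)) (windowSum b f) w
        = windowSum ((a + 1) + d) (windowSum b f) w := by rw [add_comm d 1, add_assoc]
      _ ≤ windowSum (a + 1) (windowSum (b + d) f) w := ih (by omega)
      _ ≤ windowSum a (windowSum (b + (d + 1)) f) w := windowSum_succ_windowSum_le hf (by omega)

lemma windowSum_windowSum_le {a' b' : ℕ} (hf : 0 ≤ f) (hsum : a + b = a' + b')
    (hmin : min a b ≤ min a' b') :
    windowSum a (windowSum b f) w ≤ windowSum a' (windowSum b' f) w := by
  wlog hba : b ≤ a generalizing a b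
  · rw [windowSum_comm]
    exact this (by omega) (by omega) (by omega)
  wlog hba' : b' ≤ a' generalizing a' b'
  · rw [windowSum_comm a']
    exact this (by omega) (by omega) (by omega)
  obtain ⟨d, rfl⟩ : ∃ d, b' = b + d := ⟨b' - b, by omega⟩
  obtain rfl : a = a' + d := by omega
  exact windowSum_add_windowSum_le hf hba'

end windowSum

lemma pnomialGT_succ (p m : ℕ) : pnomialGT p (m + 1) = windowSum p (pnomialGT p m) := by
  refine eq_of_backward_recurrence (d := pnomial p (m + 1)) (((m + 1) * (p - 1) : ℕ) : ℤ)
    (pnomialGT_sub_one p (m + 1)) (fun w => ?_) (fun w hw => ?_)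
  · simp only [windowSum, pnomial_succ, ← Finset.sum_add_distrib, sub_right_comm w 1,
      pnomialGT_sub_one]
  · rw [pnomialGT_eq_zero _ _ hw]
    refine (Finset.sum_eq_zero fun i hi => pnomialGT_eq_zero _ _ ?_).symm
    rw [Finset.mem_range] at hi
    rw [add_one_mul] at hw
    omega

lemma Δp_eq_windowSum {p m a c : ℕ} (hp : 2 ≤ p) (hc : c < p - 1) (ha : a < m) :
    Δp p m (a * (p - 1) + c) = windowSum (p - c) (pnomialGT p (m - a - 1)) := by
  have hdiv : (a * (p - 1) + c) / (p - 1) = a := by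
    rw [mul_comm, Nat.mul_add_div (by omega), Nat.div_eq_of_lt hc, add_zero]
  have hmod : (a * (p - 1) + c) % (p - 1) = c := by
    rw [mul_comm, Nat.mul_add_mod, Nat.mod_eq_of_lt hc]
  have hG : pnomialGT p (m - a) = windowSum p (pnomialGT p (m - a - 1)) := by
    rw [← pnomialGT_succ, Nat.sub_add_cancel (by omega)]
  funext w
  simp only [Δp, hdiv, hmod, hG]
  split_ifs with hc0
  · rw [hc0, Nat.sub_zero]
  · have htail : ∑ j ∈ Finset.Icc (p - c) (p - 1), pnomialGT p (m - a - 1) (w - j) =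
        ∑ j ∈ Finset.Ico (p - c) p, pnomialGT p (m - a - 1) (w - j) := by
      rw [← Finset.Ico_add_one_right_eq_Icc, Nat.sub_add_cancel (by omega)]
    rw [htail, windowSum, windowSum, ← Finset.sum_range_add_sum_Ico _ (Nat.sub_le p c),
      add_sub_cancel_right]

lemma windowSum_Δp {p m r : ℕ} (hp : 2 ≤ p) (hr : r ≤ m * (p - 1)) :
    windowSum p (Δp p m r) = Δp p (m + 1) r := by
  have hβ : r % (p - 1) < p - 1 := Nat.mod_lt _ (by omega)
  have hrα : r = r / (p - 1) * (p - 1) + r % (p - 1) := (Nat.div_add_mod' r (p - 1)).symm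
  have hα : r / (p - 1) ≤ m := Nat.div_le_of_le_mul (by rwa [mul_comm])
  rcases hα.lt_or_eq with hα | hα
  · rw [hrα, Δp_eq_windowSum hp hβ hα, Δp_eq_windowSum hp hβ (by omega), windowSum_comm,
      ← pnomialGT_succ]
    congr 2
    omega
  · obtain rfl : r = m * (p - 1) := by rw [hα] at hrα; omega
    have hΔ : Δp p m (m * (p - 1)) = pnomialGT p 0 := by
      funext w
      simp [Δp, Nat.mul_div_cancel _ (by omega : 0 < p - 1)]
    have hΔ' := Δp_eq_windowSum (m := m + 1) (c := 0) hp (by omega) (Nat.lt_succ_self m)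
    rw [add_zero, Nat.sub_zero, Nat.add_sub_cancel_left, Nat.sub_self] at hΔ'
    rw [hΔ, hΔ']

lemma Δp_succ_le_windowSum {p m r A : ℕ} (hp : 2 ≤ p) (hA0 : 0 < A) (hA : A ≤ p - 1)
    (hAr : A ≤ r) (hr : r ≤ m * (p - 1)) (w : ℤ) :
    Δp p (m + 1) r w ≤ windowSum (p - A) (Δp p m (r - A)) w := by
  obtain ⟨α, β, hβ, rfl⟩ : ∃ α β, β < p - 1 ∧ r = α * (p - 1) + β :=
    ⟨r / (p - 1), r % (p - 1), Nat.mod_lt _ (by omega), (Nat.div_add_mod' r (p - 1)).symm⟩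
  have hα : α ≤ m := Nat.le_of_mul_le_mul_right (by omega) (by omega : 0 < p - 1)
  have hG : ∀ n, 0 ≤ pnomialGT p n := pnomialGT_nonneg p
  rw [Δp_eq_windowSum hp hβ (Nat.lt_succ_of_le hα), show m + 1 - α - 1 = m - α by omega]
  rcases le_or_gt A β with hAβ | hβA
  · have hαm : α < m := by
      refine hα.lt_of_ne fun hαm => ?_
      subst hαm
      omega
    rw [show α * (p - 1) + β - A = α * (p - 1) + (β - A) by omega,
      Δp_eq_windowSum hp (by omega) hαm, show m - α = m - α - 1 + 1 by omega, pnomialGT_succ]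
    exact windowSum_windowSum_le (hG _) (by omega) (by omega)
  · obtain ⟨α₀, rfl⟩ : ∃ α₀, α = α₀ + 1 := Nat.exists_eq_add_one.2 <| Nat.pos_of_ne_zero <| by
      rintro rfl
      omega
    rw [show (α₀ + 1) * (p - 1) + β - A = α₀ * (p - 1) + (p - 1 + β - A) by rw [add_one_mul]; omega,
      Δp_eq_windowSum hp (by omega) (by omega : α₀ < m), show m - α₀ - 1 = m - (α₀ + 1) by omega]
    conv_lhs => rw [← windowSum_one (pnomialGT p (m - (α₀ + 1)))]
    exact windowSum_windowSum_le (hG _) (by omega) (by omega)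

theorem Δp_technical_lemma_general (p : ℕ) (hp : p.Prime) (m : ℕ)
    (w : ℤ) (r A : ℕ) (hA : A ≤ p - 1) (hAr : A ≤ r) (hr : r ≤ m * (p - 1)) :
    (Δp p (m + 1) r w ≤ ∑ i ∈ Finset.range (p - A), Δp p m (r - A) (w - (i : ℤ)))
    ∧ (∑ i ∈ Finset.range p, Δp p m r (w - (i : ℤ)) = Δp p (m + 1) r w) := by
  have hsucc : windowSum p (Δp p m r) w = Δp p (m + 1) r w :=
    congrFun (windowSum_Δp hp.two_le hr) w
  refine ⟨?_, hsucc⟩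
  rcases Nat.eq_zero_or_pos A with rfl | hA0
  · exact hsucc.ge
  · exact Δp_succ_le_windowSum hp.two_le hA0 hA hAr hr w

/-- For `0 ≤ A ≤ p−1` and `A ≤ r ≤ m(p−1)`,
`∑_{i=0}^{p−1−A} Δ_p(m, r−A, w−i) ≥ Δ_p(m+1, r, w)`, with equality when
`A = 0`, i.e. `∑_{i=0}^{p−1} Δ_p(m, r, w−i) = Δ_p(m+1, r, w)`. -/
theorem Δp_technical_lemma (p : ℕ) (hp : p.Prime) (m : ℕ) (hm : 1 ≤ m)
    (w : ℤ) (r A : ℕ) (hA : A ≤ p - 1) (hAr : A ≤ r) (hr : r ≤ m * (p - 1)) :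
    (Δp p (m + 1) r w ≤ ∑ i ∈ Finset.range (p - A), Δp p m (r - A) (w - (i : ℤ)))
    ∧ (∑ i ∈ Finset.range p, Δp p m r (w - (i : ℤ)) = Δp p (m + 1) r w) :=
  Δp_technical_lemma_general p hp m w r A hA hAr hr
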